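/- arXiv:1508.07518 — 4 statements merged into one kernel-verified Lean document; each statement's English description precedes it below -/
import Mathlib

section
/- Let R be a Noetherian ring, p a prime ideal of R, M a finitely generated R-module, and N ⊆ M a p-primary submodule. Then N is irreducible in M if and only if the localization N_p is irreducible in M_p. -/
/-- A submodule `N` of `M` is irreducible if whenever `N = N₁ ⊓ N₂` for submodules
`N₁, N₂` of `M`, then `N = N₁` or `N = N₂`. -/
def Submodule.IsIrred {R M : Type*} [CommRing R] [AddCommGroup M] [Module R M]
    (N : Submodule R M) : Prop :=
  ∀ N₁ N₂ : Submodule R M, N = N₁ ⊓ N₂ → N = N₁ ∨ N = N₂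

theorem irreducible_iff_localization_irreducible
    {R M : Type*} [CommRing R] [IsNoetherianRing R] [AddCommGroup M] [Module R M]
    [Module.Finite R M] (p : Ideal R) [p.IsPrime] (N : Submodule R M)
    (hprimary : associatedPrimes R (M ⧸ N) = {p}) :
    N.IsIrred ↔ (N.localized p.primeCompl).IsIrred := by
  set S := p.primeCompl
  set f := LocalizedModule.mkLinearMap S M with hf
  -- elements of `p.primeCompl` act injectively on `M ⧸ N`
  have hsat : ∀ (x : M) (t : S), (t : R) • x ∈ N → x ∈ N := by
    intro x t hx
    by_contra hxN
    have hzd := biUnion_associatedPrimes_eq_zero_divisors R (M ⧸ N)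
    rw [hprimary, Set.biUnion_singleton] at hzd
    have : (t : R) ∈ (p : Set R) := by
      rw [hzd]
      refine ⟨Submodule.Quotient.mk x, ?_, ?_⟩
      · simpa [Submodule.Quotient.mk_eq_zero] using hxN
      · rw [← Submodule.Quotient.mk_smul, Submodule.Quotient.mk_eq_zero]
        exact hx
    exact t.2 this
  -- `N` is saturated: the preimage of its localization is itself
  have hcomap : ∀ x : M, f x ∈ N.localized S → x ∈ N := by
    intro x hx
    obtain ⟨m, hm, t, hmt⟩ := (Submodule.mem_localized' _ _ _ _ _).1 hx
    have h1 : IsLocalizedModule.mk' f m t = IsLocalizedModule.mk' f x 1 :=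
      hmt.trans (IsLocalizedModule.mk'_one S f x).symm
    obtain ⟨c, hc⟩ := (IsLocalizedModule.mk'_eq_mk'_iff f m x t 1).1 h1
    rw [one_smul] at hc
    have : ((c * t : S) : R) • x ∈ N := by
      rw [Submonoid.coe_mul, mul_smul, ← Submonoid.smul_def, ← Submonoid.smul_def, hc,
        Submonoid.smul_def]
      exact N.smul_mem _ hm
    exact hsat x (c * t) this
  -- monotonicity of localization
  have hmono : ∀ N₁ N₂ : Submodule R M, N₁ ≤ N₂ → N₁.localized S ≤ N₂.localized S := by
    intro N₁ N₂ h x hx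
    obtain ⟨m, hm, t, hmt⟩ := (Submodule.mem_localized' _ _ _ _ _).1 hx
    exact (Submodule.mem_localized' _ _ _ _ _).2 ⟨m, h hm, t, hmt⟩
  -- localization commutes with intersection
  have hinf : ∀ N₁ N₂ : Submodule R M,
      N₁.localized S ⊓ N₂.localized S ≤ (N₁ ⊓ N₂).localized S := by
    intro N₁ N₂ x hx
    obtain ⟨m, hm, t, hmt⟩ := (Submodule.mem_localized' _ _ _ _ _).1 hx.1
    obtain ⟨m', hm', t', hmt'⟩ := (Submodule.mem_localized' _ _ _ _ _).1 hx.2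
    obtain ⟨c, hc⟩ := (IsLocalizedModule.mk'_eq_mk'_iff f m m' t t').1 (hmt.trans hmt'.symm)
    refine (Submodule.mem_localized' _ _ _ _ _).2
      ⟨((c * t' : S) : R) • m, ⟨N₁.smul_mem _ hm, ?_⟩, c * t' * t, ?_⟩
    · rw [Submonoid.coe_mul, mul_smul, ← Submonoid.smul_def, ← Submonoid.smul_def, ← hc,
        Submonoid.smul_def, Submonoid.smul_def]
      exact N₂.smul_mem _ (N₂.smul_mem _ hm')
    · rw [← hmt, ← Submonoid.smul_def, IsLocalizedModule.mk'_cancel_left]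
  -- every submodule of the localization is extended
  have hext : ∀ P : Submodule (Localization S) (LocalizedModule S M),
      P ≤ (Submodule.comap f (P.restrictScalars R)).localized S := by
    intro P x hx
    obtain ⟨⟨m, t⟩, hmt⟩ := IsLocalizedModule.mk'_surjective S f x
    simp only [Function.uncurry_apply_pair] at hmt
    have hm : f m ∈ P := by
      have := Submodule.smul_of_tower_mem (P.restrictScalars R) (t : R) hx
      rwa [← hmt, ← Submonoid.smul_def, IsLocalizedModule.mk'_cancel'] at this
    exact (Submodule.mem_localized' _ _ _ _ _).2 ⟨m, hm, t, hmt⟩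
  -- `x ∈ N` iff `f x` is in the localization of `N`
  have hmemloc : ∀ (N' : Submodule R M) (x : M), x ∈ N' → f x ∈ N'.localized S := by
    intro N' x hx
    exact (Submodule.mem_localized' _ _ _ _ _).2 ⟨x, hx, 1, IsLocalizedModule.mk'_one _ _ _⟩
  constructor
  · intro hN P₁ P₂ hP
    set N₁ := Submodule.comap f (P₁.restrictScalars R) with hN₁
    set N₂ := Submodule.comap f (P₂.restrictScalars R) with hN₂
    have hN12 : N = N₁ ⊓ N₂ := by
      apply le_antisymm
      · intro x hx
        have := hmemloc N x hx
        rw [hP] at this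
        exact ⟨this.1, this.2⟩
      · intro x hx
        apply hcomap
        rw [hP]
        exact ⟨hx.1, hx.2⟩
    rcases hN N₁ N₂ hN12 with h | h
    · left
      apply le_antisymm (hP ▸ inf_le_left)
      calc P₁ ≤ N₁.localized S := hext P₁
        _ = N.localized S := by rw [← h]
    · right
      apply le_antisymm (hP ▸ inf_le_right)
      calc P₂ ≤ N₂.localized S := hext P₂
        _ = N.localized S := by rw [← h]
  · intro hL N₁ N₂ hN
    have hloc : N.localized S = N₁.localized S ⊓ N₂.localized S := by
      apply le_antisymm
      · exact le_inf (hmono _ _ (hN ▸ inf_le_left)) (hmono _ _ (hN ▸ inf_le_right))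
      · intro x hx
        have := hinf N₁ N₂ hx
        rwa [← hN] at this
    rcases hL _ _ hloc with h | h
    · left
      apply le_antisymm (hN ▸ inf_le_left)
      intro x hx
      apply hcomap
      rw [h]
      exact hmemloc N₁ x hx
    · right
      apply le_antisymm (hN ▸ inf_le_right)
      intro x hx
      apply hcomap
      rw [h]
      exact hmemloc N₂ x hx
end

section
/- Let k be a field, R = k[x,y], and b ∈ k with b ≠ −1. Then (x²+xy, x²−y², y³) = (x+y, y³) ∩ (x−by, y²). -/
/-!
Write an element of the intersection as `f = A (x + y) + B y³ = C (x - b y) + D y²`. Comparing the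
linear parts of the two expressions gives `A(0) = C(0)` and `A(0) = -b C(0)`, so `(1 + b) A(0) = 0`
and `A(0) = 0`. Hence `A = P x + Q y`, and `f = (P + Q)(x² + xy) - Q (x² - y²) + B y³` because
`y (x + y) = (x² + xy) - (x² - y²)`.
-/

open MvPolynomial

theorem MvPolynomial.mem_idealOfVars_iff {σ R : Type*} [CommSemiring R] (p : MvPolynomial σ R) :
    p ∈ idealOfVars σ R ↔ constantCoeff p = 0 := by
  rw [← pow_one (idealOfVars σ R), mem_pow_idealOfVars_iff', constantCoeff_eq]
  simp [Finsupp.degree_eq_zero_iff]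

theorem MvPolynomial.exists_eq_mul_X_add_mul_X_of_constantCoeff_eq_zero {R : Type*}
    [CommSemiring R] {p : MvPolynomial (Fin 2) R} (hp : constantCoeff p = 0) :
    ∃ a b, a * X 0 + b * X 1 = p := by
  obtain ⟨c, hc⟩ := Ideal.mem_span_range_iff_exists_fun.mp ((mem_idealOfVars_iff p).mpr hp)
  exact ⟨c 0, c 1, by simpa [Fin.sum_univ_two] using hc⟩

section

variable {R : Type*} [CommRing R]

theorem span_le_inf_span (b : R) :
    (Ideal.span {X 0 ^ 2 + X 0 * X 1, X 0 ^ 2 - X 1 ^ 2, X 1 ^ 3} :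
        Ideal (MvPolynomial (Fin 2) R)) ≤
      Ideal.span {X 0 + X 1, X 1 ^ 3} ⊓ Ideal.span {X 0 - C b * X 1, X 1 ^ 2} := by
  simp only [Ideal.span_le, Set.insert_subset_iff, Set.singleton_subset_iff, SetLike.mem_coe,
    Ideal.mem_inf, Ideal.mem_span_pair]
  refine ⟨⟨⟨X 0, 0, by ring⟩, ⟨X 0 + C (1 + b) * X 1, C ((1 + b) * b), ?_⟩⟩,
    ⟨⟨X 0 - X 1, 0, by ring⟩, ⟨X 0 + C b * X 1, C (b * b - 1), ?_⟩⟩,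
    ⟨⟨0, 1, by ring⟩, ⟨0, X 1, by ring⟩⟩⟩
  · simp only [C_add, C_mul, C_1]; ring
  · simp only [C_sub, C_mul, C_1]; ring

theorem constantCoeff_eq_zero_of_mul_add_mem_span [NoZeroDivisors R] {b : R} (hb : b ≠ -1)
    {A B : MvPolynomial (Fin 2) R}
    (h : A * (X 0 + X 1) + B * X 1 ^ 3 ∈ Ideal.span {X 0 - C b * X 1, X 1 ^ 2}) :
    constantCoeff A = 0 := by
  obtain ⟨C', D, hCD⟩ := Ideal.mem_span_pair.mp h
  -- `f ↦ (∂f/∂xᵢ)(0)` reads off the linear part of `f`.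
  have hx : constantCoeff C' = constantCoeff A := by
    simpa using congrArg (fun f ↦ eval 0 (pderiv 0 f)) hCD
  have hy : -(constantCoeff C' * b) = constantCoeff A := by
    simpa using congrArg (fun f ↦ eval 0 (pderiv 1 f)) hCD
  have : (1 + b) * constantCoeff A = 0 := by linear_combination -b * hx - hy
  exact (mul_eq_zero.mp this).resolve_left fun h₁ ↦ hb (by linear_combination h₁)

theorem mul_add_mem_span_of_constantCoeff_eq_zero {A : MvPolynomial (Fin 2) R}
    (hA : constantCoeff A = 0) (B : MvPolynomial (Fin 2) R) :
    A * (X 0 + X 1) + B * X 1 ^ 3 ∈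
      Ideal.span {X 0 ^ 2 + X 0 * X 1, X 0 ^ 2 - X 1 ^ 2, X 1 ^ 3} := by
  obtain ⟨P, Q, rfl⟩ := exists_eq_mul_X_add_mul_X_of_constantCoeff_eq_zero hA
  exact Submodule.mem_span_triple.mpr ⟨P + Q, -Q, B, by simp only [smul_eq_mul]; ring⟩

end

theorem ideal_eq_inter_with_parameter
    {k : Type*} [Field k] (b : k) (hb : b ≠ -1) :
    (Ideal.span {(X 0 : MvPolynomial (Fin 2) k) ^ 2 + X 0 * X 1,
        (X 0 : MvPolynomial (Fin 2) k) ^ 2 - X 1 ^ 2,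
        (X 1 : MvPolynomial (Fin 2) k) ^ 3} : Ideal (MvPolynomial (Fin 2) k)) =
      Ideal.span {(X 0 : MvPolynomial (Fin 2) k) + X 1, X 1 ^ 3} ⊓
        Ideal.span {(X 0 : MvPolynomial (Fin 2) k) - C b * X 1, X 1 ^ 2} := by
  refine le_antisymm (span_le_inf_span b) ?_
  rintro f ⟨hf₁, hf₂⟩
  obtain ⟨A, B, rfl⟩ := Ideal.mem_span_pair.mp hf₁
  exact mul_add_mem_span_of_constantCoeff_eq_zero
    (constantCoeff_eq_zero_of_mul_add_mem_span hb hf₂) B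
end

section
/- Let R be a ℤ-graded Noetherian ring and M a finitely generated graded R-module. If every graded-irreducible graded submodule of M is irreducible, then for every graded submodule N of M, the index of reducibility r_M(N) equals the graded index of reducibility r^g_M(N). -/
/-- A submodule is homogeneous (graded) w.r.t. a grading `ℳ` of `M` if it contains all
homogeneous components of its elements. -/
def Submodule.IsHomogeneousWrt {R M : Type*} [CommRing R] [AddCommGroup M] [Module R M]
    (ℳ : ℤ → AddSubgroup M) [DirectSum.Decomposition ℳ] (N : Submodule R M) : Prop :=
  ∀ (i : ℤ) (x : M), x ∈ N → (DirectSum.decompose ℳ x i : M) ∈ N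

/-- A graded submodule `N` is graded-irreducible if whenever `N = N₁ ⊓ N₂` for graded
submodules `N₁, N₂`, then `N = N₁` or `N = N₂`. -/
def Submodule.IsGradedIrred {R M : Type*} [CommRing R] [AddCommGroup M] [Module R M]
    (ℳ : ℤ → AddSubgroup M) [DirectSum.Decomposition ℳ] (N : Submodule R M) : Prop :=
  ∀ N₁ N₂ : Submodule R M, N₁.IsHomogeneousWrt ℳ → N₂.IsHomogeneousWrt ℳ →
    N = N₁ ⊓ N₂ → N = N₁ ∨ N = N₂

/-- The index of reducibility: the minimal `r ≥ 1` such that `N` is an intersection of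
`r` irreducible submodules. -/
noncomputable def Submodule.reducibilityIndex {R M : Type*} [CommRing R] [AddCommGroup M]
    [Module R M] (N : Submodule R M) : ℕ :=
  sInf {r | 0 < r ∧ ∃ f : Fin r → Submodule R M, (∀ i, (f i).IsIrred) ∧ N = ⨅ i, f i}

/-- The graded index of reducibility: the minimal `r ≥ 1` such that `N` is an intersection
of `r` graded-irreducible graded submodules. -/
noncomputable def Submodule.gradedReducibilityIndex {R M : Type*} [CommRing R]
    [AddCommGroup M] [Module R M] (ℳ : ℤ → AddSubgroup M) [DirectSum.Decomposition ℳ]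
    (N : Submodule R M) : ℕ :=
  sInf {r | 0 < r ∧ ∃ f : Fin r → Submodule R M,
    (∀ i, (f i).IsHomogeneousWrt ℳ ∧ (f i).IsGradedIrred ℳ) ∧ N = ⨅ i, f i}

section Aux

variable {R M : Type*} [CommRing R] [AddCommGroup M] [Module R M]

lemma Submodule.isIrred_top' : (⊤ : Submodule R M).IsIrred := by
  intro N₁ N₂ h
  exact Or.inl (top_le_iff.mp (h.le.trans inf_le_left)).symm

variable (ℳ : ℤ → AddSubgroup M) [DirectSum.Decomposition ℳ]

lemma Submodule.isHomogeneousWrt_top' : (⊤ : Submodule R M).IsHomogeneousWrt ℳ :=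
  fun _ _ _ => trivial

lemma Submodule.IsIrred.isGradedIrred' {N : Submodule R M} (h : N.IsIrred) :
    N.IsGradedIrred ℳ := fun N₁ N₂ _ _ he => h N₁ N₂ he

/-- The binary exchange lemma, via modularity of the submodule lattice. -/
lemma exchange_two' {a q p b₁ b₂ : Submodule R M} (hq : q.IsIrred) (ha : a = q ⊓ p)
    (h : a = b₁ ⊓ b₂ ⊓ p) : a = b₁ ⊓ p ∨ a = b₂ ⊓ p := by
  have hac₁ : a ≤ b₁ ⊓ p := h.le.trans (inf_le_inf_right p inf_le_left)
  have hac₂ : a ≤ b₂ ⊓ p := h.le.trans (inf_le_inf_right p inf_le_right)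
  have haq : a ≤ q := ha.le.trans inf_le_left
  have h3 : (q ⊔ (b₂ ⊓ p)) ⊓ p = b₂ ⊓ p := by
    rw [sup_comm, sup_inf_assoc_of_le _ inf_le_right, ← ha, sup_comm]
    exact sup_eq_right.mpr hac₂
  have h4 : (b₁ ⊓ p) ⊓ (q ⊔ (b₂ ⊓ p)) = a := by
    calc b₁ ⊓ p ⊓ (q ⊔ b₂ ⊓ p) = b₁ ⊓ (p ⊓ (q ⊔ b₂ ⊓ p)) := by rw [inf_assoc]
      _ = b₁ ⊓ ((q ⊔ b₂ ⊓ p) ⊓ p) := by rw [inf_comm p]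
      _ = b₁ ⊓ (b₂ ⊓ p) := by rw [h3]
      _ = b₁ ⊓ b₂ ⊓ p := by rw [inf_assoc]
      _ = a := h.symm
  have key : q = (q ⊔ (b₁ ⊓ p)) ⊓ (q ⊔ (b₂ ⊓ p)) := by
    rw [sup_inf_assoc_of_le _ le_sup_left, h4]
    exact (sup_eq_left.mpr haq).symm
  rcases hq _ _ key with hc | hc
  · left
    have hle : b₁ ⊓ p ≤ q := le_sup_right.trans hc.ge
    exact le_antisymm hac₁ (ha ▸ le_inf hle inf_le_right)
  · right
    have hle : b₂ ⊓ p ≤ q := le_sup_right.trans hc.ge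
    exact le_antisymm hac₂ (ha ▸ le_inf hle inf_le_right)

/-- The finite exchange lemma. -/
lemma exchange_finset' {ι : Type*} [DecidableEq ι] {a q p : Submodule R M} (hq : q.IsIrred)
    (ha : a = q ⊓ p) (s : Finset ι) (b : ι → Submodule R M) :
    a = s.inf b ⊓ p → a = p ∨ ∃ j ∈ s, a = b j ⊓ p := by
  induction s using Finset.induction_on with
  | empty => intro h; rw [Finset.inf_empty, top_inf_eq] at h; exact Or.inl h
  | @insert j₀ t hj ih =>
    intro h
    rw [Finset.inf_insert] at h
    rcases exchange_two' hq ha h with hc | hc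
    · exact Or.inr ⟨j₀, Finset.mem_insert_self _ _, hc⟩
    · rcases ih hc with hc' | ⟨j, hjt, hc'⟩
      · exact Or.inl hc'
      · exact Or.inr ⟨j, Finset.mem_insert_of_mem hjt, hc'⟩

lemma iInf_eq_inf_erase' {n : ℕ} (f : Fin n → Submodule R M) (i₀ : Fin n) :
    ⨅ i, f i = f i₀ ⊓ (Finset.univ.erase i₀).inf f := by
  apply le_antisymm
  · exact le_inf (iInf_le _ _) (Finset.le_inf fun j _ => iInf_le _ _)
  · refine le_iInf fun i => ?_
    by_cases h : i = i₀
    · subst h; exact inf_le_left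
    · exact inf_le_right.trans
        (Finset.inf_le (Finset.mem_erase.mpr ⟨h, Finset.mem_univ _⟩))

lemma Finset.inf_univ_eq_iInf' {n : ℕ} (f : Fin n → Submodule R M) :
    Finset.univ.inf f = ⨅ i, f i :=
  le_antisymm (le_iInf fun j => Finset.inf_le (Finset.mem_univ j))
    (Finset.le_inf fun j _ => iInf_le _ _)

/-- Every graded submodule of a Noetherian module is a finite intersection of
graded-irreducible graded submodules. -/
lemma exists_graded_decomposition' [IsNoetherian R M] :
    ∀ N : Submodule R M, N.IsHomogeneousWrt ℳ →
      ∃ r : ℕ, 0 < r ∧ ∃ f : Fin r → Submodule R M,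
        (∀ i, (f i).IsHomogeneousWrt ℳ ∧ (f i).IsGradedIrred ℳ) ∧ N = ⨅ i, f i := by
  intro N
  induction N using IsNoetherian.induction with
  | hgt N ih =>
    intro hN
    by_cases hirr : N.IsGradedIrred ℳ
    · exact ⟨1, one_pos, fun _ => N, fun _ => ⟨hN, hirr⟩, (iInf_const).symm⟩
    · unfold Submodule.IsGradedIrred at hirr
      push_neg at hirr
      obtain ⟨N₁, N₂, h₁, h₂, heq, hne₁, hne₂⟩ := hirr
      have hlt₁ : N < N₁ := lt_of_le_of_ne (heq.le.trans inf_le_left) hne₁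
      have hlt₂ : N < N₂ := lt_of_le_of_ne (heq.le.trans inf_le_right) hne₂
      obtain ⟨r₁, hr₁, f₁, hf₁, he₁⟩ := ih N₁ hlt₁ h₁
      obtain ⟨r₂, hr₂, f₂, hf₂, he₂⟩ := ih N₂ hlt₂ h₂
      refine ⟨r₁ + r₂, by omega, Sum.elim f₁ f₂ ∘ finSumFinEquiv.symm, ?_, ?_⟩
      · intro i
        rcases hj : finSumFinEquiv.symm i with j | j
        · simpa [hj] using hf₁ j
        · simpa [hj] using hf₂ j
      · have he : ⨅ i, (Sum.elim f₁ f₂ ∘ finSumFinEquiv.symm) i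
            = ⨅ x : Fin r₁ ⊕ Fin r₂, Sum.elim f₁ f₂ x :=
          Equiv.iInf_comp (finSumFinEquiv.symm) (g := Sum.elim f₁ f₂)
        rw [he, iInf_sum]
        simpa using heq.trans (by rw [he₁, he₂])

end Aux

theorem reducibilityIndex_eq_gradedReducibilityIndex_of_gradedIrred_imp_irred
    {R M : Type*} [CommRing R] [IsNoetherianRing R] [AddCommGroup M] [Module R M]
    [Module.Finite R M] (𝒜 : ℤ → AddSubgroup R) [GradedRing 𝒜]
    (ℳ : ℤ → AddSubgroup M) [DirectSum.Decomposition ℳ] [SetLike.GradedSMul 𝒜 ℳ]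
    (H : ∀ N : Submodule R M, N.IsHomogeneousWrt ℳ → N.IsGradedIrred ℳ → N.IsIrred) :
    ∀ N : Submodule R M, N.IsHomogeneousWrt ℳ →
      N.reducibilityIndex = N.gradedReducibilityIndex ℳ := by
  intro N hN
  set S : Set ℕ :=
    {r | 0 < r ∧ ∃ f : Fin r → Submodule R M, (∀ i, (f i).IsIrred) ∧ N = ⨅ i, f i} with hS
  set Sg : Set ℕ :=
    {r | 0 < r ∧ ∃ f : Fin r → Submodule R M,
      (∀ i, (f i).IsHomogeneousWrt ℳ ∧ (f i).IsGradedIrred ℳ) ∧ N = ⨅ i, f i} with hSg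
  obtain ⟨s, hspos, g, hg, hge⟩ := exists_graded_decomposition' ℳ N hN
  have hSgne : Sg.Nonempty := ⟨s, hspos, g, hg, hge⟩
  have hsub : Sg ⊆ S := by
    rintro r ⟨hr, f, hf, he⟩
    exact ⟨hr, f, fun i => H _ (hf i).1 (hf i).2, he⟩
  have hSne : S.Nonempty := hSgne.mono hsub
  obtain ⟨hrpos, f, hf, hfe⟩ := Nat.sInf_mem hSne
  -- the replacement process: turn the minimal irreducible decomposition into a graded one
  have key : ∀ k : ℕ, ∃ f' : Fin (sInf S) → Submodule R M, (∀ i, (f' i).IsIrred) ∧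
      (∀ i : Fin (sInf S), (i : ℕ) < k → (f' i).IsHomogeneousWrt ℳ ∧ (f' i).IsGradedIrred ℳ) ∧
      N = ⨅ i, f' i := by
    intro k
    induction k with
    | zero => exact ⟨f, hf, fun i hi => absurd hi (by omega), hfe⟩
    | succ k ih =>
      obtain ⟨f', hf'irr, hf'g, hf'e⟩ := ih
      by_cases hk : k < sInf S
      · set i₀ : Fin (sInf S) := ⟨k, hk⟩ with hi₀
        set p := (Finset.univ.erase i₀).inf f' with hp
        have hsplit : N = f' i₀ ⊓ p := hf'e.trans (iInf_eq_inf_erase' f' i₀)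
        have hNlep : N ≤ p := hsplit.le.trans inf_le_right
        have hNg : N = Finset.univ.inf g ⊓ p := by
          rw [Finset.inf_univ_eq_iInf', ← hge]
          exact (inf_eq_left.mpr hNlep).symm
        have hrepl : ∃ v : Submodule R M, v.IsIrred ∧ v.IsHomogeneousWrt ℳ ∧
            v.IsGradedIrred ℳ ∧ N = v ⊓ p := by
          rcases exchange_finset' (hf'irr i₀) hsplit Finset.univ g hNg with hNp | ⟨j, _, hNj⟩
          · exact ⟨⊤, Submodule.isIrred_top', Submodule.isHomogeneousWrt_top' ℳ,
              (Submodule.isIrred_top').isGradedIrred' ℳ, by rw [top_inf_eq]; exact hNp⟩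
          · exact ⟨g j, H _ (hg j).1 (hg j).2, (hg j).1, (hg j).2, hNj⟩
        obtain ⟨v, hvirr, hvhom, hvgi, hNv⟩ := hrepl
        refine ⟨Function.update f' i₀ v, ?_, ?_, ?_⟩
        · intro i
          by_cases hii : i = i₀
          · subst hii; simpa using hvirr
          · rw [Function.update_of_ne hii]; exact hf'irr i
        · intro i hik
          by_cases hii : i = i₀
          · subst hii; simp [hvhom, hvgi]
          · rw [Function.update_of_ne hii]
            refine hf'g i ?_
            have : (i : ℕ) ≠ k := fun hc => hii (Fin.ext hc)
            omega
        · rw [iInf_eq_inf_erase' (Function.update f' i₀ v) i₀, Function.update_self]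
          have hsame : (Finset.univ.erase i₀).inf (Function.update f' i₀ v) = p := by
            refine Finset.inf_congr rfl fun j hj => ?_
            exact Function.update_of_ne (Finset.ne_of_mem_erase hj) _ _
          rw [hsame]; exact hNv
      · exact ⟨f', hf'irr, fun i _ => hf'g i (lt_of_lt_of_le i.isLt (not_lt.mp hk)), hf'e⟩
  obtain ⟨f', _, hf'g, hf'e⟩ := key (sInf S)
  have hrSg : sInf S ∈ Sg := ⟨hrpos, f', fun i => hf'g i i.isLt, hf'e⟩
  exact le_antisymm (Nat.sInf_le (hsub (Nat.sInf_mem hSgne))) (Nat.sInf_le hrSg)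
end

section
/- Let R be a ℤ-graded Noetherian ring and M a finitely generated graded R-module. If every graded submodule of M is a finite intersection of irreducible graded submodules, then every graded-irreducible graded submodule of M is irreducible. -/
/-! A graded submodule that is graded-irreducible equals one of the members of any finite
decomposition into graded submodules (or `⊤`, the empty intersection), so a decomposition into
graded submodules that are irreducible exhibits it as irreducible. -/

namespace Submodule

variable {R M : Type*} [CommRing R] [AddCommGroup M] [Module R M]

theorem isIrred_top : (⊤ : Submodule R M).IsIrred :=
  fun _ _ h => Or.inl (top_unique (h.le.trans inf_le_left)).symm

section Graded

variable {ℳ : ℤ → AddSubgroup M} [DirectSum.Decomposition ℳ]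

theorem isHomogeneousWrt_finsetInf {ι : Type*} {s : Finset ι} {f : ι → Submodule R M}
    (hf : ∀ i ∈ s, (f i).IsHomogeneousWrt ℳ) : (s.inf f).IsHomogeneousWrt ℳ := by
  intro j x hx
  rw [mem_finsetInf] at hx ⊢
  exact fun i hi => hf i hi j x (hx i hi)

theorem IsGradedIrred.eq_top_or_exists_eq_of_eq_finsetInf {N : Submodule R M}
    (hN : N.IsGradedIrred ℳ) {ι : Type*} (s : Finset ι) {f : ι → Submodule R M}
    (hf : ∀ i ∈ s, (f i).IsHomogeneousWrt ℳ) (h : N = s.inf f) :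
    N = ⊤ ∨ ∃ i ∈ s, N = f i := by
  induction s using Finset.cons_induction with
  | empty => exact Or.inl h
  | cons a s ha ih =>
    rw [Finset.forall_mem_cons] at hf
    rw [Finset.inf_cons] at h
    rcases hN _ _ hf.1 (isHomogeneousWrt_finsetInf hf.2) h with hNa | hNs
    · exact Or.inr ⟨a, Finset.mem_cons_self a s, hNa⟩
    · rcases ih hf.2 hNs with hNtop | ⟨i, hi, hNi⟩
      · exact Or.inl hNtop
      · exact Or.inr ⟨i, Finset.mem_cons_of_mem hi, hNi⟩

end Graded

end Submodule

theorem gradedIrred_imp_irred_of_graded_decompositions_general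
    {R M : Type*} [CommRing R] [AddCommGroup M] [Module R M]
    (ℳ : ℤ → AddSubgroup M) [DirectSum.Decomposition ℳ]
    (H : ∀ N : Submodule R M, N.IsHomogeneousWrt ℳ →
      ∃ s : Finset (Submodule R M),
        (∀ P ∈ s, P.IsHomogeneousWrt ℳ ∧ P.IsIrred) ∧ N = s.inf id) :
    ∀ N : Submodule R M, N.IsHomogeneousWrt ℳ → N.IsGradedIrred ℳ → N.IsIrred := by
  intro N hN hgi
  obtain ⟨s, hs, hNs⟩ := H N hN
  rcases hgi.eq_top_or_exists_eq_of_eq_finsetInf s (fun P hP => (hs P hP).1) hNs with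
    hNtop | ⟨P, hP, hNP⟩
  · exact hNtop ▸ Submodule.isIrred_top
  · exact hNP ▸ (hs P hP).2

theorem gradedIrred_imp_irred_of_graded_decompositions
    {R M : Type*} [CommRing R] [IsNoetherianRing R] [AddCommGroup M] [Module R M]
    [Module.Finite R M] (𝒜 : ℤ → AddSubgroup R) [GradedRing 𝒜]
    (ℳ : ℤ → AddSubgroup M) [DirectSum.Decomposition ℳ] [SetLike.GradedSMul 𝒜 ℳ]
    (H : ∀ N : Submodule R M, N.IsHomogeneousWrt ℳ →
      ∃ s : Finset (Submodule R M),
        (∀ P ∈ s, P.IsHomogeneousWrt ℳ ∧ P.IsIrred) ∧ N = s.inf id) :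
    ∀ N : Submodule R M, N.IsHomogeneousWrt ℳ → N.IsGradedIrred ℳ → N.IsIrred :=
  gradedIrred_imp_irred_of_graded_decompositions_general ℳ H
end
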